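/- arXiv:1010.2300 — 4 statements merged into one kernel-verified Lean document; each statement's English description precedes it below -/
import Mathlib

section
/- A 5-dimensional smooth quadric hypersurface Q^5 ⊂ P^6 does not contain a copy of the Segre threefold P^1 × P^2 embedded by the Segre embedding. -/
/-!
A symmetric form `β` on `ℂ² ⊗ ℂ³` vanishing on decomposable tensors satisfies
`β (a ⊗ b) (a' ⊗ b') = det (a, a') * c b b'` with `c` alternating on `ℂ³`. An alternating form in
odd dimension is degenerate, so a kernel vector `w` of `c` puts the plane `ℂ² ⊗ w` into the radical
of `β`. But the restriction of a nondegenerate form on `ℂ⁷` to a 6-dimensional subspace has a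
radical of dimension at most `7 - 6 = 1`.
-/

open Module LinearMap
open scoped Matrix

section Isotropy

variable {K M : Type*} [Field K] [NeZero (2 : K)] [AddCommGroup M] [Module K M]
  {β : M →ₗ[K] M →ₗ[K] K}

theorem LinearMap.IsSymm.apply_eq_zero_of_isotropic (hβ : β.IsSymm) {x y : M}
    (hx : β x x = 0) (hy : β y y = 0) (hxy : β (x + y) (x + y) = 0) : β x y = 0 := by
  have hyx := hβ.eq x y
  simp only [map_add, add_apply, RingHom.id_apply] at hxy hyx
  have : (2 : K) * β x y = 0 := by linear_combination hxy - hx - hy + hyx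
  exact (mul_eq_zero.mp this).resolve_left two_ne_zero

variable {A C : Type*} [AddCommGroup A] [Module K A] [AddCommGroup C] [Module K C]
  {T : A →ₗ[K] C →ₗ[K] M}

theorem LinearMap.IsSymm.apply_apply_eq_zero_of_right_eq (hβ : β.IsSymm)
    (hT : ∀ a c, β (T a c) (T a c) = 0) (a a' : A) (c : C) : β (T a c) (T a' c) = 0 :=
  hβ.apply_eq_zero_of_isotropic (hT a c) (hT a' c)
    (by simpa only [map_add, add_apply] using hT (a + a') c)

theorem LinearMap.IsSymm.apply_apply_eq_zero_of_left_eq (hβ : β.IsSymm)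
    (hT : ∀ a c, β (T a c) (T a c) = 0) (a : A) (c c' : C) : β (T a c) (T a c') = 0 :=
  hβ.apply_apply_eq_zero_of_right_eq (T := T.flip) (fun c a => hT a c) c c' a

theorem LinearMap.IsSymm.apply_apply_swap_right (hβ : β.IsSymm)
    (hT : ∀ a c, β (T a c) (T a c) = 0) (a a' : A) (c c' : C) :
    β (T a c) (T a' c') = -β (T a c') (T a' c) := by
  have h := hβ.apply_apply_eq_zero_of_right_eq hT a a' (c + c')
  simp only [map_add, add_apply, hβ.apply_apply_eq_zero_of_right_eq hT] at h
  linear_combination h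

theorem LinearMap.IsSymm.apply_apply_eq_det_mul (hβ : β.IsSymm)
    {T : (Fin 2 → K) →ₗ[K] C →ₗ[K] M} (hT : ∀ a c, β (T a c) (T a c) = 0)
    (a a' : Fin 2 → K) (c c' : C) :
    β (T a c) (T a' c') =
      (a 0 * a' 1 - a 1 * a' 0) * β (T (Pi.single 0 1) c) (T (Pi.single 1 1) c') := by
  have hfin : ∀ v : Fin 2 → K, v = v 0 • Pi.single 0 1 + v 1 • Pi.single 1 1 := by
    intro v; ext i; fin_cases i <;> simp
  have hswap := hβ.apply_apply_swap_right hT (Pi.single 1 1) (Pi.single 0 1) c c'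
  have hsymm := hβ.eq (T (Pi.single 1 1) c') (T (Pi.single 0 1) c)
  conv_lhs => rw [hfin a, hfin a']
  simp only [map_add, map_smul, add_apply, smul_apply, smul_eq_mul,
    hβ.apply_apply_eq_zero_of_left_eq hT, RingHom.id_apply] at hswap hsymm ⊢
  linear_combination (a 1 * a' 0) * (hswap - hsymm)

end Isotropy

section Skew

variable {K κ : Type*} [Field K] [NeZero (2 : K)] [Fintype κ] [DecidableEq κ]

theorem LinearMap.not_separatingLeft_of_antisymm (hκ : Odd (Fintype.card κ))
    {c : (κ → K) →ₗ[K] (κ → K) →ₗ[K] K} (hc : ∀ x y, c x y = -c y x) : ¬ c.SeparatingLeft := by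
  set P := LinearMap.toMatrix₂' K c
  have hP : Pᵀ = -P := by
    ext i j; simp [P, LinearMap.toMatrix₂'_apply, hc (Pi.single j 1)]
  have hdet : P.det = -P.det := calc
    P.det = (-P).det := by rw [← hP, Matrix.det_transpose]
    _ = -P.det := by rw [Matrix.det_neg, hκ.neg_one_pow, neg_one_mul]
  rw [← LinearMap.separatingLeft_toMatrix₂'_iff, Matrix.separatingLeft_iff_det_ne_zero, not_not]
  have h2 : (2 : K) * P.det = 0 := by linear_combination hdet
  exact (mul_eq_zero.mp h2).resolve_left two_ne_zero

end Skew

section Segre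

variable (K ι κ : Type*) [CommSemiring K]

def segre : (ι → K) →ₗ[K] (κ → K) →ₗ[K] (ι × κ → K) :=
  LinearMap.mk₂ K (fun a b p => a p.1 * b p.2)
    (fun _ _ _ => by ext; simp [add_mul]) (fun _ _ _ => by ext; simp [mul_assoc])
    (fun _ _ _ => by ext; simp [mul_add]) (fun _ _ _ => by ext; simp [mul_left_comm])

variable {K ι κ}

@[simp]
theorem segre_apply (a : ι → K) (b : κ → K) (p : ι × κ) : segre K ι κ a b p = a p.1 * b p.2 := rfl

theorem segre_single_single [DecidableEq ι] [DecidableEq κ] (p : ι × κ) (r : K) :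
    segre K ι κ (Pi.single p.1 r) (Pi.single p.2 1) = Pi.single p r := by
  ext q
  by_cases h1 : q.1 = p.1 <;> by_cases h2 : q.2 = p.2 <;>
    simp [Pi.single_apply, h1, h2, Prod.ext_iff]

end Segre

section Radical

variable {K κ : Type*} [Field K] [NeZero (2 : K)] [Fintype κ] [DecidableEq κ]

theorem two_le_finrank_ker_of_isotropic_segre (hκ : Odd (Fintype.card κ))
    {β : (Fin 2 × κ → K) →ₗ[K] (Fin 2 × κ → K) →ₗ[K] K} (hβ : β.IsSymm)
    (hiso : ∀ a b, β (segre K (Fin 2) κ a b) (segre K (Fin 2) κ a b) = 0) :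
    2 ≤ finrank K (ker β) := by
  set T := segre K (Fin 2) κ
  obtain ⟨w, hw, hw0⟩ :
      ∃ w, (∀ y, β (T (Pi.single 0 1) w) (T (Pi.single 1 1) y) = 0) ∧ w ≠ 0 := by
    have := not_separatingLeft_of_antisymm hκ
      (c := β.compl₁₂ (T (Pi.single 0 1)) (T (Pi.single 1 1)))
      (fun x y => hβ.apply_apply_swap_right hiso _ _ x y)
    simpa [SeparatingLeft] using this
  have hrange : range (T.flip w) ≤ ker β := by
    rintro _ ⟨a, rfl⟩
    refine pi_ext fun p r => ?_
    rw [LinearMap.zero_apply, flip_apply, ← segre_single_single,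
      hβ.apply_apply_eq_det_mul hiso, hw, mul_zero]
  have hinj : Function.Injective (T.flip w) := by
    obtain ⟨j, hj⟩ : ∃ j, w j ≠ 0 := Function.ne_iff.mp hw0
    refine (injective_iff_map_eq_zero _).mpr fun a ha => funext fun i => ?_
    simpa [T, hj] using congrFun ha (i, j)
  calc 2 = finrank K (range (T.flip w)) := by simp [finrank_range_of_inj hinj]
    _ ≤ finrank K (ker β) := Submodule.finrank_mono hrange

end Radical

theorem finrank_ker_compl₁₂_add_finrank_le {K V W : Type*} [Field K] [AddCommGroup V] [Module K V]
    [AddCommGroup W] [Module K W] [FiniteDimensional K V] {B : V →ₗ[K] V →ₗ[K] K}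
    (hB : B.SeparatingLeft) {ι : W →ₗ[K] V} (hι : Function.Injective ι) :
    finrank K (ker (B.compl₁₂ ι ι)) + finrank K W ≤ finrank K V := by
  have : FiniteDimensional K W := Module.Finite.of_injective ι hι
  set Φ := ι.dualMap ∘ₗ B
  have hBsurj : Function.Surjective B :=
    (injective_iff_surjective_of_finrank_eq_finrank Subspace.dual_finrank_eq.symm).mp
      (ker_eq_bot.mp (separatingLeft_iff_ker_eq_bot.mp hB))
  have hΦ : Function.Surjective Φ := (dualMap_surjective_of_injective hι).comp hBsurj
  have hrank : finrank K (ker Φ) + finrank K W = finrank K V := by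
    rw [← Φ.finrank_range_add_finrank_ker, range_eq_top.mpr hΦ, finrank_top,
      Subspace.dual_finrank_eq, add_comm]
  have hker : finrank K (ker (B.compl₁₂ ι ι)) ≤ finrank K (ker Φ) := calc
    _ = finrank K (Submodule.comap ι (ker Φ)) := by
      rw [show B.compl₁₂ ι ι = Φ ∘ₗ ι from rfl, ker_comp]
    _ = finrank K (Submodule.map ι (Submodule.comap ι (ker Φ))) :=
      (Submodule.equivMapOfInjective ι hι _).finrank_eq
    _ ≤ _ := Submodule.finrank_mono (Submodule.map_comap_le _ _)
  omega

/-- A 5-dimensional smooth quadric `Q^5 ⊂ P^6` (zero locus of a nondegenerate symmetric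
bilinear form on `ℂ^7`) does not contain a copy of the Segre threefold `P^1 × P^2`: there is no
injective linear map from `ℂ^2 ⊗ ℂ^3 ≅ ℂ^6` into `ℂ^7` carrying the affine cone over the Segre
variety (the decomposable tensors `a ⊗ b`) into the quadric cone. -/
theorem quadric5_no_segre_threefold
    (B : (Fin 7 → ℂ) →ₗ[ℂ] (Fin 7 → ℂ) →ₗ[ℂ] ℂ)
    (hsymm : ∀ x y, B x y = B y x)
    (hnondeg : ∀ x, (∀ y, B x y = 0) → x = 0) :
    ¬ ∃ ι : (Fin 2 × Fin 3 → ℂ) →ₗ[ℂ] (Fin 7 → ℂ), Function.Injective ι ∧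
        ∀ (a : Fin 2 → ℂ) (b : Fin 3 → ℂ),
          B (ι fun p => a p.1 * b p.2) (ι fun p => a p.1 * b p.2) = 0 := by
  rintro ⟨ι, hι, hiso⟩
  have hlower := two_le_finrank_ker_of_isotropic_segre (by decide)
    (β := B.compl₁₂ ι ι) ⟨fun x y => hsymm (ι x) (ι y)⟩ hiso
  have hupper := finrank_ker_compl₁₂_add_finrank_le hnondeg hι
  simp only [finrank_fintype_fun_eq_card, Fintype.card_prod, Fintype.card_fin] at hupper
  omega
end

section
/- A smooth 5-dimensional complete intersection of two quadrics X ⊂ P^7 does not contain a linear subspace of dimension 3. -/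
/-!
By polarization both quadrics vanish on `W × W`, so `x ↦ Bᵢ x` maps the `4`-dimensional `W` into
its `4`-dimensional annihilator in the dual space. Over `ℂ` some member `a B₁ + b B₂` of this
pencil of maps kills a nonzero `x ∈ W` (an eigenvector of `B₂⁻¹ B₁` when `B₂` is invertible), and
such an `x` is a singular point of `X`.
-/

open Module

theorem LinearMap.exists_ne_zero_smul_add_smul_eq_zero {K V V' : Type*} [Field K] [IsAlgClosed K]
    [AddCommGroup V] [Module K V] [FiniteDimensional K V] [Nontrivial V]
    [AddCommGroup V'] [Module K V'] [FiniteDimensional K V']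
    (hrank : finrank K V' ≤ finrank K V) (f g : V →ₗ[K] V') :
    ∃ a b : K, ¬(a = 0 ∧ b = 0) ∧ ∃ x ≠ 0, a • f x + b • g x = 0 := by
  by_cases hg : Function.Injective g
  · let e := g.linearEquivOfInjective hg (le_antisymm (g.finrank_le_finrank_of_injective hg) hrank)
    obtain ⟨μ, hμ⟩ := Module.End.exists_eigenvalue (e.symm.toLinearMap ∘ₗ f)
    obtain ⟨x, hx, hx0⟩ := hμ.exists_hasEigenvector
    refine ⟨1, -μ, by simp, x, hx0, ?_⟩
    have hfx : f x = μ • g x := by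
      simpa [e] using congrArg e (Module.End.mem_eigenspace_iff.mp hx)
    simp [hfx]
  · obtain ⟨x, hx, hx0⟩ := Submodule.exists_mem_ne_zero_of_ne_bot (mt LinearMap.ker_eq_bot.mp hg)
    exact ⟨0, 1, by simp, x, hx0, by simp [LinearMap.mem_ker.mp hx]⟩

theorem LinearMap.apply_eq_zero_of_forall_self_eq_zero {K V : Type*} [Field K] [NeZero (2 : K)]
    [AddCommGroup V] [Module K V] {B : V →ₗ[K] V →ₗ[K] K} (hB : ∀ x y, B x y = B y x)
    {W : Submodule K V} (hW : ∀ w ∈ W, B w w = 0) {x y : V} (hx : x ∈ W) (hy : y ∈ W) :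
    B x y = 0 := by
  have hxy := hW (x + y) (add_mem hx hy)
  simp only [map_add, LinearMap.add_apply, hW x hx, hW y hy, hB y x] at hxy
  have : (2 : K) * B x y = 0 := by linear_combination hxy
  exact (mul_eq_zero.mp this).resolve_left two_ne_zero

theorem Submodule.exists_smul_add_smul_eq_zero_of_isotropic {K V : Type*} [Field K] [IsAlgClosed K]
    [AddCommGroup V] [Module K V] [FiniteDimensional K V] (B₁ B₂ : V →ₗ[K] V →ₗ[K] K)
    {W : Submodule K V} (hpos : 0 < finrank K W) (hdim : finrank K V ≤ 2 * finrank K W)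
    (h₁ : ∀ x ∈ W, ∀ y ∈ W, B₁ x y = 0) (h₂ : ∀ x ∈ W, ∀ y ∈ W, B₂ x y = 0) :
    ∃ a b : K, ¬(a = 0 ∧ b = 0) ∧ ∃ x ∈ W, x ≠ 0 ∧ a • B₁ x + b • B₂ x = 0 := by
  have : Nontrivial W := Module.finrank_pos_iff.mp hpos
  let toAnnihilator (B : V →ₗ[K] V →ₗ[K] K) (hB : ∀ x ∈ W, ∀ y ∈ W, B x y = 0) :
      W →ₗ[K] W.dualAnnihilator :=
    (B ∘ₗ W.subtype).codRestrict _ fun x => (mem_dualAnnihilator _).mpr (hB x x.2)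
  have hrank : finrank K W.dualAnnihilator ≤ finrank K W := by
    have := Subspace.finrank_add_finrank_dualAnnihilator_eq W
    omega
  obtain ⟨a, b, hab, x, hx0, hx⟩ := LinearMap.exists_ne_zero_smul_add_smul_eq_zero
    (K := K) (V := W) (V' := W.dualAnnihilator) hrank (toAnnihilator B₁ h₁) (toAnnihilator B₂ h₂)
  refine ⟨a, b, hab, x, x.2, by simpa using hx0, ?_⟩
  simpa [toAnnihilator, Subtype.ext_iff] using hx

/-- A smooth 5-dimensional complete intersection of two quadrics `X ⊂ P^7` contains no linear
subspace of dimension 3.  Here `X` is the common zero locus of two symmetric bilinear forms on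
`ℂ^8`; smoothness (transversality) says that at every nonzero common zero the two differentials
are linearly independent.  A `P^3 ⊂ X` corresponds to a 4-dimensional linear subspace of `ℂ^8`
on which both forms vanish. -/
theorem intersection_two_quadrics_no_P3
    (B₁ B₂ : (Fin 8 → ℂ) →ₗ[ℂ] (Fin 8 → ℂ) →ₗ[ℂ] ℂ)
    (hsymm₁ : ∀ x y, B₁ x y = B₁ y x) (hsymm₂ : ∀ x y, B₂ x y = B₂ y x)
    (hsmooth : ∀ x : Fin 8 → ℂ, x ≠ 0 → B₁ x x = 0 → B₂ x x = 0 →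
        ∀ a b : ℂ, (∀ v, a * B₁ x v + b * B₂ x v = 0) → a = 0 ∧ b = 0) :
    ¬ ∃ W : Submodule ℂ (Fin 8 → ℂ), Module.finrank ℂ W = 4 ∧
        ∀ w ∈ W, B₁ w w = 0 ∧ B₂ w w = 0 := by
  rintro ⟨W, hW, hiso⟩
  have h₁ := fun x (hx : x ∈ W) y (hy : y ∈ W) =>
    LinearMap.apply_eq_zero_of_forall_self_eq_zero hsymm₁ (fun w hw => (hiso w hw).1) hx hy
  have h₂ := fun x (hx : x ∈ W) y (hy : y ∈ W) =>
    LinearMap.apply_eq_zero_of_forall_self_eq_zero hsymm₂ (fun w hw => (hiso w hw).2) hx hy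
  obtain ⟨a, b, hab, x, hxW, hx0, hx⟩ :=
    W.exists_smul_add_smul_eq_zero_of_isotropic B₁ B₂ (by omega) (by simp [hW]) h₁ h₂
  exact hab (hsmooth x hx0 (hiso x hxW).1 (hiso x hxW).2 a b fun v => by
    simpa using LinearMap.congr_fun hx v)
end

section
/- A smooth (2n+1)-dimensional complete intersection X ⊂ P^{2n+3} of two quadrics is swept out by n-dimensional linear subspaces: through every point of X there passes a linear subspace P^n contained in X. -/
/-!
Over an algebraically closed field, two symmetric bilinear forms on a space of dimension `d`
always have a common totally isotropic subspace of dimension `⌊(d - 1) / 2⌋`. The proof is by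
induction on `d`. If the base locus has a singular point `v`, the common polar space of `v` has
codimension at most one, and `v` together with a common isotropic subspace of a complement of `v`
in it does the job. Otherwise some member of the pencil is degenerate, and splitting off one of its
kernel vectors diagonalises both forms simultaneously; after a shear the diagonal entries are
`a i` and `μ i * a i` with `a i ≠ 0` and the `μ i` pairwise distinct. The vectors
`∑ i, (μ i ^ j * α i) • b i` for `j < ⌊(d - 1) / 2⌋`, where `α i ^ 2 * a i` is the nodal weight
`∏_{k ≠ i} (μ i - μ k)⁻¹`, are then isotropic for both forms by the Lagrange identity
`∑ i, μ i ^ r / ∏_{k ≠ i} (μ i - μ k) = 0` (`r ≤ d - 2`), and independent by Vandermonde.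

Through a given point `x` of the base locus one applies this to a complement of `x` in its common
polar space, of dimension at least `d - 3`, and adds `x`.
-/

open Module
open LinearMap (BilinForm)

section LinearAlgebra

variable {K V : Type*} [Field K] [AddCommGroup V] [Module K V]

theorem finrank_le_finrank_ker_add [FiniteDimensional K V] {V' : Type*} [AddCommGroup V']
    [Module K V'] [FiniteDimensional K V'] (φ : V →ₗ[K] V') :
    finrank K V ≤ finrank K (LinearMap.ker φ) + finrank K V' := by
  have := (LinearMap.range φ).finrank_le
  have := φ.finrank_range_add_finrank_ker
  omega

theorem finrank_le_finrank_ker_add_one [FiniteDimensional K V] (f : Dual K V) :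
    finrank K V ≤ finrank K (LinearMap.ker f) + 1 := by
  simpa using finrank_le_finrank_ker_add f

theorem finrank_le_finrank_ker_inf_ker_add_two [FiniteDimensional K V] (f g : Dual K V) :
    finrank K V ≤ finrank K ↥(LinearMap.ker f ⊓ LinearMap.ker g) + 2 := by
  have := finrank_le_finrank_ker_add (f.prod g)
  rwa [LinearMap.ker_prod, finrank_prod, finrank_self] at this

theorem finrank_le_finrank_ker_inf_ker_add_one [FiniteDimensional K V] {f g : Dual K V}
    (h : ¬LinearIndependent K ![f, g]) :
    finrank K V ≤ finrank K ↥(LinearMap.ker f ⊓ LinearMap.ker g) + 1 := by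
  rw [LinearIndependent.pair_iff] at h
  push Not at h
  obtain ⟨s, t, hst, hne⟩ := h
  by_cases hs : s = 0
  · have hg : g = 0 := by simpa [hs, hne hs] using hst
    rw [hg, LinearMap.ker_zero, inf_top_eq]
    exact finrank_le_finrank_ker_add_one f
  · have hle : LinearMap.ker g ≤ LinearMap.ker f := fun x hx => by
      have := congr($hst x)
      simp only [LinearMap.add_apply, LinearMap.smul_apply, smul_eq_mul,
        LinearMap.zero_apply] at this
      rw [LinearMap.mem_ker] at hx ⊢
      simpa [hx, hs] using this
    rw [inf_eq_right.mpr hle]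
    exact finrank_le_finrank_ker_add_one g

theorem Submodule.exists_le_notMem_finrank_le [FiniteDimensional K V] (S : Submodule K V)
    {x : V} (hx : x ≠ 0) : ∃ U ≤ S, x ∉ U ∧ finrank K S ≤ finrank K U + 1 := by
  obtain ⟨f, hf⟩ : ∃ f : Dual K V, f x ≠ 0 := by
    by_contra! h
    exact hx ((forall_dual_apply_eq_zero_iff K x).mp h)
  refine ⟨S ⊓ LinearMap.ker f, inf_le_left, fun h => hf h.2, ?_⟩
  have := Submodule.finrank_sup_add_finrank_inf_eq S (LinearMap.ker f)
  have := (S ⊔ LinearMap.ker f).finrank_le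
  have := finrank_le_finrank_ker_add_one f
  omega

theorem Submodule.exists_le_finrank_eq (W : Submodule K V) {k : ℕ} (hk : k ≤ finrank K W) :
    ∃ W' ≤ W, finrank K W' = k := by
  obtain ⟨f, hf⟩ := exists_linearIndependent_of_le_finrank hk
  refine ⟨(Submodule.span K (Set.range f)).map W.subtype, Submodule.map_subtype_le _ _, ?_⟩
  rw [Submodule.finrank_map_subtype_eq, finrank_span_eq_card hf, Fintype.card_fin]

theorem exists_add_mul_ne_zero [Infinite K] {ι : Type*} [Fintype ι] {a b : ι → K}
    (h : ∀ i, a i ≠ 0 ∨ b i ≠ 0) : ∃ c : K, ∀ i, a i + c * b i ≠ 0 := by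
  classical
  obtain ⟨c, hc⟩ := Infinite.exists_notMem_finset (Finset.univ.image fun i => -a i / b i)
  refine ⟨c, fun i h0 => ?_⟩
  by_cases hb : b i = 0
  · rw [hb, mul_zero, add_zero] at h0
    exact (h i).elim (· h0) (· hb)
  · exact hc (Finset.mem_image.mpr ⟨i, Finset.mem_univ _, by
      field_simp
      linear_combination -h0⟩)

theorem linearIndependent_pow_mul {m n : ℕ} (hmn : m ≤ n) {μ α : Fin n → K}
    (hμ : Function.Injective μ) (hα : ∀ i, α i ≠ 0) :
    LinearIndependent K (fun (j : Fin m) (i : Fin n) => μ i ^ (j : ℕ) * α i) := by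
  rw [Fintype.linearIndependent_iff]
  intro g hg
  have hvan : (Matrix.vandermonde (μ ∘ Fin.castLE hmn)).mulVec g = 0 := by
    ext i
    have := congr_fun hg (Fin.castLE hmn i)
    simp only [Finset.sum_apply, Pi.smul_apply, smul_eq_mul, Pi.zero_apply] at this
    simp only [Matrix.mulVec, dotProduct, Matrix.vandermonde_apply, Function.comp_apply,
      Pi.zero_apply]
    have hα' := hα (Fin.castLE hmn i)
    refine (mul_eq_zero.mp ?_).resolve_right hα'
    rw [Finset.sum_mul, ← this]
    exact Finset.sum_congr rfl fun j _ => by ring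
  exact congr_fun (Matrix.eq_zero_of_mulVec_eq_zero
    (Matrix.det_vandermonde_ne_zero_iff.mpr (hμ.comp (Fin.castLE_injective hmn))) hvan)

end LinearAlgebra

theorem Lagrange.sum_pow_mul_nodalWeight_eq_zero {F ι : Type*} [Field F] [DecidableEq ι]
    {s : Finset ι} {v : ι → F} (hvs : Set.InjOn v s) {r : ℕ} (hr : r + 2 ≤ s.card) :
    ∑ i ∈ s, v i ^ r * nodalWeight s v i = 0 := by
  have := Lagrange.coeff_eq_sum hvs (P := Polynomial.X ^ r) (by
    rw [Polynomial.degree_X_pow]; exact_mod_cast (by omega : r < s.card))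
  rw [Polynomial.coeff_X_pow, if_neg (by omega)] at this
  simp only [Polynomial.eval_pow, Polynomial.eval_X, div_eq_mul_inv,
    ← Finset.prod_inv_distrib] at this
  exact this.symm

namespace LinearMap.BilinForm

variable {K V : Type*} [Field K] [AddCommGroup V] [Module K V]

def IsTotallyIsotropic (B : BilinForm K V) (W : Submodule K V) : Prop :=
  ∀ x ∈ W, ∀ y ∈ W, B x y = 0

/-- `v` spans a singular point of the base locus `{B₁ = B₂ = 0}` of the pencil of quadrics:
the differentials `B₁ v`, `B₂ v` of the two quadrics there are dependent. -/
def IsSingularPoint (B₁ B₂ : BilinForm K V) (v : V) : Prop :=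
  v ≠ 0 ∧ B₁ v v = 0 ∧ B₂ v v = 0 ∧ ¬LinearIndependent K ![B₁ v, B₂ v]

variable {B B₁ B₂ : BilinForm K V}

theorem IsTotallyIsotropic.mono {W W' : Submodule K V} (h : B.IsTotallyIsotropic W)
    (hle : W' ≤ W) : B.IsTotallyIsotropic W' :=
  fun x hx y hy => h x (hle hx) y (hle hy)

theorem isTotallyIsotropic_span {ι : Type*} {c : ι → V} (h : ∀ i j, B (c i) (c j) = 0) :
    B.IsTotallyIsotropic (Submodule.span K (Set.range c)) := by
  have hleft (i) : Submodule.span K (Set.range c) ≤ LinearMap.ker (B (c i)) :=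
    Submodule.span_le.mpr (Set.range_subset_iff.mpr (h i))
  intro x hx y hy
  have : Submodule.span K (Set.range c) ≤ LinearMap.ker (B.flip y) :=
    Submodule.span_le.mpr (Set.range_subset_iff.mpr fun i => hleft i hy)
  exact this hx

theorem IsTotallyIsotropic.map_subtype {U : Submodule K V} {W : Submodule K U}
    (h : (B.restrict U).IsTotallyIsotropic W) : B.IsTotallyIsotropic (W.map U.subtype) := by
  rintro _ ⟨x, hx, rfl⟩ _ ⟨y, hy, rfl⟩
  exact h x hx y hy

theorem IsTotallyIsotropic.sup_span_singleton (hB : B.IsSymm) {W : Submodule K V}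
    (hW : B.IsTotallyIsotropic W) {v : V} (hv : B v v = 0) (hWv : W ≤ LinearMap.ker (B v)) :
    B.IsTotallyIsotropic (W ⊔ K ∙ v) := by
  intro x hx y hy
  obtain ⟨w, hw, _, hz, rfl⟩ := Submodule.mem_sup.mp hx
  obtain ⟨w', hw', _, hz', rfl⟩ := Submodule.mem_sup.mp hy
  obtain ⟨a, rfl⟩ := Submodule.mem_span_singleton.mp hz
  obtain ⟨a', rfl⟩ := Submodule.mem_span_singleton.mp hz'
  have hvw' : B v w' = 0 := hWv hw'
  have hwv : B w v = 0 := by rw [hB.eq]; exact hWv hw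
  simp [hW w hw w' hw', hvw', hwv, hv]

theorem exists_mem_isTotallyIsotropic_of_restrict [FiniteDimensional K V] (h₁ : B₁.IsSymm)
    (h₂ : B₂.IsSymm) {v : V} (hv₁ : B₁ v v = 0) (hv₂ : B₂ v v = 0) {U : Submodule K V}
    (hU : U ≤ LinearMap.ker (B₁ v) ⊓ LinearMap.ker (B₂ v)) (hvU : v ∉ U)
    {W₀ : Submodule K U} (hW₁ : (B₁.restrict U).IsTotallyIsotropic W₀)
    (hW₂ : (B₂.restrict U).IsTotallyIsotropic W₀) :
    ∃ W : Submodule K V, v ∈ W ∧ finrank K W = finrank K W₀ + 1 ∧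
      B₁.IsTotallyIsotropic W ∧ B₂.IsTotallyIsotropic W := by
  have hle : W₀.map U.subtype ≤ U := Submodule.map_subtype_le U W₀
  refine ⟨W₀.map U.subtype ⊔ K ∙ v,
    Submodule.mem_sup_right (Submodule.mem_span_singleton_self v), ?_,
    hW₁.map_subtype.sup_span_singleton h₁ hv₁ (hle.trans (hU.trans inf_le_left)),
    hW₂.map_subtype.sup_span_singleton h₂ hv₂ (hle.trans (hU.trans inf_le_right))⟩
  rw [Submodule.finrank_sup_span_singleton (fun h => hvU (hle h)),
    Submodule.finrank_map_subtype_eq]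

theorem IsSingularPoint.of_add_smul {c : K} {v : V}
    (h : IsSingularPoint (B₁ + c • B₂) B₂ v) : IsSingularPoint B₁ B₂ v := by
  obtain ⟨hv0, hv₁, hv₂, hdep⟩ := h
  refine ⟨hv0, by simpa [hv₂] using hv₁, hv₂, fun hli => hdep ?_⟩
  rw [LinearIndependent.pair_iff] at hli ⊢
  intro s t hst
  have := hli s (s * c + t) (by
    rw [← hst, LinearMap.add_apply, LinearMap.smul_apply]
    module)
  exact ⟨this.1, by simpa [this.1] using this.2⟩

theorem IsSingularPoint.of_restrict (h₁ : B₁.IsSymm) (h₂ : B₂.IsSymm) {k : V}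
    {U : Submodule K V} (hU : U ⊔ K ∙ k = ⊤) (hU₁ : U ≤ LinearMap.ker (B₁ k))
    (hU₂ : U ≤ LinearMap.ker (B₂ k)) {u : U}
    (hu : IsSingularPoint (B₁.restrict U) (B₂.restrict U) u) : IsSingularPoint B₁ B₂ u := by
  obtain ⟨hu0, hu₁, hu₂, hdep⟩ := hu
  refine ⟨by simpa using hu0, hu₁, hu₂, fun hli => hdep ?_⟩
  rw [LinearIndependent.pair_iff] at hli ⊢
  intro s t hst
  refine hli s t ?_
  have hker : U ⊔ K ∙ k ≤ LinearMap.ker (s • B₁ u + t • B₂ u) := by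
    refine sup_le (fun x hx => ?_) (Submodule.span_singleton_le_iff_mem _ _ |>.mpr ?_)
    · simpa using congr($hst ⟨x, hx⟩)
    · have hk₁ : B₁ k u = 0 := hU₁ u.2
      have hk₂ : B₂ k u = 0 := hU₂ u.2
      simp [h₁.eq u k, h₂.eq u k, hk₁, hk₂]
  rwa [hU, top_le_iff, LinearMap.ker_eq_top] at hker

theorem exists_ne_zero_not_linearIndependent [IsAlgClosed K] [FiniteDimensional K V]
    [Nontrivial V] (B₁ B₂ : BilinForm K V) : ∃ v ≠ 0, ¬LinearIndependent K ![B₁ v, B₂ v] := by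
  by_cases hB₂ : B₂.Nondegenerate
  · obtain ⟨μ, hμ⟩ := Module.End.exists_eigenvalue ((B₂.toDual hB₂).symm.toLinearMap ∘ₗ B₁)
    obtain ⟨v, hv⟩ := hμ.exists_hasEigenvector
    refine ⟨v, hv.2, fun hli => ?_⟩
    have hBv : B₁ v = μ • B₂ v := by
      have := congr(B₂.toDual hB₂ $(hv.apply_eq_smul))
      simp only [LinearMap.comp_apply, LinearEquiv.coe_coe, LinearEquiv.apply_symm_apply,
        map_smul] at this
      exact this
    have := LinearIndependent.pair_iff.mp hli 1 (-μ) (by rw [hBv]; module)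
    exact one_ne_zero this.1
  · rw [nondegenerate_iff_ker_eq_bot, ← ne_eq, Submodule.ne_bot_iff] at hB₂
    obtain ⟨v, hv, hv0⟩ := hB₂
    exact ⟨v, hv0, fun hli => hli.ne_zero 1 (by simpa using hv)⟩

theorem exists_basis_diagonal [IsAlgClosed K] [FiniteDimensional K V] (h₁ : B₁.IsSymm)
    (h₂ : B₂.IsSymm) (hB : ∀ v, ¬IsSingularPoint B₁ B₂ v) :
    ∃ (n : ℕ) (b : Basis (Fin n) K V),
      (∀ i j, i ≠ j → B₁ (b i) (b j) = 0 ∧ B₂ (b i) (b j) = 0) ∧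
      ∀ i, B₁ (b i) (b i) ≠ 0 ∨ B₂ (b i) (b i) ≠ 0 := by
  induction hd : finrank K V using Nat.strong_induction_on generalizing V with
  | _ d ih =>
  rcases subsingleton_or_nontrivial V with hV | hV
  · exact ⟨0, Basis.empty V, fun i => i.elim0, fun i => i.elim0⟩
  obtain ⟨k, hk0, hdep⟩ := exists_ne_zero_not_linearIndependent B₁ B₂
  have hk : ¬(B₁ k k = 0 ∧ B₂ k k = 0) := fun h => hB k ⟨hk0, h.1, h.2, hdep⟩
  set U := LinearMap.ker (B₁ k) ⊓ LinearMap.ker (B₂ k)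
  have hkU : k ∉ U := fun h => hk ⟨h.1, h.2⟩
  have hdU : finrank K U + 1 = d := by
    have hle : d ≤ finrank K U + 1 := hd ▸ finrank_le_finrank_ker_inf_ker_add_one hdep
    have hlt : finrank K U < d := hd ▸ Submodule.finrank_lt fun h => hkU (h ▸ Submodule.mem_top)
    omega
  have hUk : U ⊔ K ∙ k = ⊤ := Submodule.eq_top_of_finrank_eq (by
    rw [Submodule.finrank_sup_span_singleton hkU, hdU, hd])
  obtain ⟨n, b, hoff, hdiag⟩ := ih _ (by omega) (h₁.restrict U) (h₂.restrict U)
    (fun u hu => hB u (hu.of_restrict h₁ h₂ hUk inf_le_left inf_le_right)) rfl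
  have hn : n + 1 = d := by rw [← hdU, finrank_eq_card_basis b, Fintype.card_fin]
  have hbU : Submodule.span K (Set.range (U.subtype ∘ b)) ≤ U := by
    rw [Submodule.span_le]
    rintro _ ⟨i, rfl⟩
    exact (b i).2
  have hli : LinearIndependent K (Fin.cons k (U.subtype ∘ b) : Fin (n + 1) → V) :=
    linearIndependent_finCons.mpr ⟨b.linearIndependent.map' _ U.ker_subtype, fun h => hkU (hbU h)⟩
  refine ⟨n + 1, basisOfLinearIndependentOfCardEqFinrank' _ hli (by simp [hn, hd]), ?_, ?_⟩
  · have hkb (j) : B₁ k (b j) = 0 ∧ B₂ k (b j) = 0 := (b j).2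
    intro i j hij
    simp only [coe_basisOfLinearIndependentOfCardEqFinrank']
    cases i using Fin.cases <;> cases j using Fin.cases
    · exact absurd rfl hij
    · simpa using hkb _
    · simpa [h₁.eq _ k, h₂.eq _ k] using hkb _
    · simpa using hoff _ _ (fun h => hij (by rw [h]))
  · intro i
    simp only [coe_basisOfLinearIndependentOfCardEqFinrank']
    cases i using Fin.cases
    · simpa using not_and_or.mp hk
    · simpa using hdiag _

section Diagonal

variable {n : ℕ} (b : Basis (Fin n) K V) {a μ : Fin n → K}

theorem injective_of_diagonal [IsAlgClosed K] (ha : ∀ i, a i ≠ 0)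
    (h₁ : ∀ i j, B₁ (b i) (b j) = if i = j then a i else 0)
    (h₂ : ∀ i j, B₂ (b i) (b j) = if i = j then μ i * a i else 0)
    (hB : ∀ v, ¬IsSingularPoint B₁ B₂ v) : Function.Injective μ := by
  intro i j hij
  by_contra hne
  obtain ⟨s, hs⟩ := IsAlgClosed.exists_eq_mul_self (-a j / a i)
  have hsa : s * s * a i + a j = 0 := by rw [← hs]; field_simp [ha i]; ring
  apply hB (s • b i + b j)
  refine ⟨fun h0 => ?_, ?_, ?_, ?_⟩
  · simpa [Finsupp.single_apply, hne] using congr(b.repr $h0 j)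
  · simp [h₁, hne, Ne.symm hne]
    linear_combination hsa
  · simp [h₂, hne, Ne.symm hne, hij]
    linear_combination μ j * hsa
  · rw [LinearIndependent.pair_iff]
    push Not
    refine ⟨μ i, -1, b.ext fun l => ?_, fun _ => by simp⟩
    simp only [map_add, map_smul, LinearMap.add_apply, LinearMap.smul_apply, h₁, h₂]
    split_ifs <;> simp_all [mul_left_comm]

theorem exists_isTotallyIsotropic_of_diagonal [IsAlgClosed K] (ha : ∀ i, a i ≠ 0)
    (hμ : Function.Injective μ)
    (h₁ : ∀ i j, B₁ (b i) (b j) = if i = j then a i else 0)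
    (h₂ : ∀ i j, B₂ (b i) (b j) = if i = j then μ i * a i else 0) :
    ∃ W : Submodule K V, finrank K W = (n - 1) / 2 ∧
      B₁.IsTotallyIsotropic W ∧ B₂.IsTotallyIsotropic W := by
  classical
  choose α hα using fun i =>
    IsAlgClosed.exists_eq_mul_self (Lagrange.nodalWeight Finset.univ μ i / a i)
  have hαa (i) : α i * α i * a i = Lagrange.nodalWeight Finset.univ μ i := by
    rw [← hα, div_mul_cancel₀ _ (ha i)]
  have hα0 (i) : α i ≠ 0 := fun h => Lagrange.nodalWeight_ne_zero hμ.injOn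
    (Finset.mem_univ i) (by rw [← hαa, h, zero_mul, zero_mul])
  set c : Fin ((n - 1) / 2) → V := fun j => b.equivFun.symm fun i => μ i ^ (j : ℕ) * α i
  have hc : LinearIndependent K c :=
    (linearIndependent_pow_mul (by omega) hμ hα0).map' _ b.equivFun.symm.ker
  -- `B₁ (c j) (c l)` and `B₂ (c j) (c l)` are the cases `r = 0` and `r = 1`
  have hsum (j l : Fin ((n - 1) / 2)) (r : ℕ) (hr : r ≤ 1) :
      ∑ i, (μ i ^ (j : ℕ) * α i) * (μ i ^ (l : ℕ) * α i) * (μ i ^ r * a i) = 0 := by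
    rw [← Lagrange.sum_pow_mul_nodalWeight_eq_zero hμ.injOn (r := j + l + r) (by
      rw [Finset.card_univ, Fintype.card_fin]; omega)]
    refine Finset.sum_congr rfl fun i _ => ?_
    rw [← hαa]
    ring
  refine ⟨Submodule.span K (Set.range c), by rw [finrank_span_eq_card hc, Fintype.card_fin],
    isTotallyIsotropic_span fun j l => ?_, isTotallyIsotropic_span fun j l => ?_⟩
  · simpa [c, Basis.equivFun_symm_apply, h₁, Finset.mul_sum, mul_assoc]
      using hsum l j 0 zero_le_one
  · simpa [c, Basis.equivFun_symm_apply, h₂, Finset.mul_sum, mul_assoc]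
      using hsum l j 1 le_rfl

end Diagonal

theorem exists_isTotallyIsotropic_of_forall_not_isSingularPoint [IsAlgClosed K]
    [FiniteDimensional K V] (h₁ : B₁.IsSymm) (h₂ : B₂.IsSymm)
    (hB : ∀ v, ¬IsSingularPoint B₁ B₂ v) :
    ∃ W : Submodule K V, finrank K W = (finrank K V - 1) / 2 ∧
      B₁.IsTotallyIsotropic W ∧ B₂.IsTotallyIsotropic W := by
  obtain ⟨n, b, hoff, hdiag⟩ := exists_basis_diagonal h₁ h₂ hB
  obtain ⟨c, hc⟩ := exists_add_mul_ne_zero hdiag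
  set a : Fin n → K := fun i => (B₁ + c • B₂) (b i) (b i)
  have ha (i) : a i ≠ 0 := by simpa [a] using hc i
  have hc₁ (i j) : (B₁ + c • B₂) (b i) (b j) = if i = j then a i else 0 := by
    split_ifs with hij
    · rw [hij]
    · simp [hoff i j hij]
  have hc₂ (i j) : B₂ (b i) (b j) = if i = j then B₂ (b i) (b i) / a i * a i else 0 := by
    split_ifs with hij
    · rw [hij, div_mul_cancel₀ _ (ha j)]
    · exact (hoff i j hij).2
  have hB' (v) : ¬IsSingularPoint (B₁ + c • B₂) B₂ v := fun h => hB v h.of_add_smul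
  obtain ⟨W, hW, hW₁, hW₂⟩ := exists_isTotallyIsotropic_of_diagonal b ha
    (injective_of_diagonal b ha hc₁ hc₂ hB') hc₁ hc₂
  refine ⟨W, by rw [hW, finrank_eq_card_basis b, Fintype.card_fin], fun x hx y hy => ?_, hW₂⟩
  simpa [hW₂ x hx y hy] using hW₁ x hx y hy

theorem exists_isTotallyIsotropic [IsAlgClosed K] [FiniteDimensional K V] (h₁ : B₁.IsSymm)
    (h₂ : B₂.IsSymm) :
    ∃ W : Submodule K V, (finrank K V - 1) / 2 ≤ finrank K W ∧
      B₁.IsTotallyIsotropic W ∧ B₂.IsTotallyIsotropic W := by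
  induction hd : finrank K V using Nat.strong_induction_on generalizing V with
  | _ d ih =>
  by_cases hsing : ∃ v, IsSingularPoint B₁ B₂ v
  · obtain ⟨v, hv0, hv₁, hv₂, hdep⟩ := hsing
    obtain ⟨U, hU, hvU, hdU⟩ :=
      (LinearMap.ker (B₁ v) ⊓ LinearMap.ker (B₂ v)).exists_le_notMem_finrank_le hv0
    have hdS := hd ▸ finrank_le_finrank_ker_inf_ker_add_one hdep
    have hlt : finrank K U < d := hd ▸ Submodule.finrank_lt fun h => hvU (h ▸ Submodule.mem_top)
    obtain ⟨W₀, hW₀, hW₀₁, hW₀₂⟩ := ih _ hlt (h₁.restrict U) (h₂.restrict U) rfl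
    obtain ⟨W, -, hW, hW₁, hW₂⟩ :=
      exists_mem_isTotallyIsotropic_of_restrict h₁ h₂ hv₁ hv₂ hU hvU hW₀₁ hW₀₂
    exact ⟨W, by omega, hW₁, hW₂⟩
  · push Not at hsing
    obtain ⟨W, hW, hW₁, hW₂⟩ :=
      exists_isTotallyIsotropic_of_forall_not_isSingularPoint h₁ h₂ hsing
    exact ⟨W, by omega, hW₁, hW₂⟩

theorem exists_isTotallyIsotropic_finrank_eq [IsAlgClosed K] [FiniteDimensional K V]
    (h₁ : B₁.IsSymm) (h₂ : B₂.IsSymm) {k : ℕ} (hk : 2 * k + 1 ≤ finrank K V) :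
    ∃ W : Submodule K V, finrank K W = k ∧
      B₁.IsTotallyIsotropic W ∧ B₂.IsTotallyIsotropic W := by
  obtain ⟨W, hW, hW₁, hW₂⟩ := exists_isTotallyIsotropic h₁ h₂
  obtain ⟨W', hW', hk'⟩ := W.exists_le_finrank_eq (k := k) (by omega)
  exact ⟨W', hk', hW₁.mono hW', hW₂.mono hW'⟩

theorem exists_mem_isTotallyIsotropic [IsAlgClosed K] [FiniteDimensional K V]
    (h₁ : B₁.IsSymm) (h₂ : B₂.IsSymm) {x : V} (hx₁ : B₁ x x = 0) (hx₂ : B₂ x x = 0) {k : ℕ}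
    (hk : 2 * k + 4 ≤ finrank K V) :
    ∃ W : Submodule K V, x ∈ W ∧ finrank K W = k + 1 ∧
      B₁.IsTotallyIsotropic W ∧ B₂.IsTotallyIsotropic W := by
  by_cases hx0 : x = 0
  · obtain ⟨W, hW⟩ := exists_isTotallyIsotropic_finrank_eq h₁ h₂ (k := k + 1) (by omega)
    exact ⟨W, hx0 ▸ W.zero_mem, hW⟩
  obtain ⟨U, hU, hxU, hdU⟩ :=
    (LinearMap.ker (B₁ x) ⊓ LinearMap.ker (B₂ x)).exists_le_notMem_finrank_le hx0
  have hdS := finrank_le_finrank_ker_inf_ker_add_two (B₁ x) (B₂ x)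
  obtain ⟨W₀, hW₀, hW₀₁, hW₀₂⟩ :=
    exists_isTotallyIsotropic_finrank_eq (h₁.restrict U) (h₂.restrict U) (k := k) (by omega)
  obtain ⟨W, hxW, hW, hW₁, hW₂⟩ :=
    exists_mem_isTotallyIsotropic_of_restrict h₁ h₂ hx₁ hx₂ hU hxU hW₀₁ hW₀₂
  exact ⟨W, hxW, hW₀ ▸ hW, hW₁, hW₂⟩

end LinearMap.BilinForm

theorem intersection_two_quadrics_swept_by_linear_spaces_general (n : ℕ)
    (B₁ B₂ : (Fin (2 * n + 4) → ℂ) →ₗ[ℂ] (Fin (2 * n + 4) → ℂ) →ₗ[ℂ] ℂ)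
    (hsymm₁ : ∀ x y, B₁ x y = B₁ y x) (hsymm₂ : ∀ x y, B₂ x y = B₂ y x) :
    ∀ x : Fin (2 * n + 4) → ℂ, B₁ x x = 0 → B₂ x x = 0 →
      ∃ W : Submodule ℂ (Fin (2 * n + 4) → ℂ), Module.finrank ℂ W = n + 1 ∧ x ∈ W ∧
        ∀ w ∈ W, B₁ w w = 0 ∧ B₂ w w = 0 := by
  intro x hx₁ hx₂
  obtain ⟨W, hxW, hW, hW₁, hW₂⟩ :=
    LinearMap.BilinForm.exists_mem_isTotallyIsotropic ⟨hsymm₁⟩ ⟨hsymm₂⟩ hx₁ hx₂ (k := n) (by simp)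
  exact ⟨W, hW, hxW, fun w hw => ⟨hW₁ w hw w hw, hW₂ w hw w hw⟩⟩

/-- A smooth `(2n+1)`-dimensional complete intersection of two quadrics `X ⊂ P^{2n+3}` is swept
out by `n`-dimensional linear subspaces: through every point of `X` there is a `P^n` contained
in `X`.  Here `X` is the common zero locus of two symmetric bilinear forms on `ℂ^{2n+4}`,
assumed smooth (transverse), and a `P^n ⊆ X` through `x` corresponds to an `(n+1)`-dimensional
linear subspace `W ⊆ ℂ^{2n+4}` with `x ∈ W` on which both forms vanish. -/
theorem intersection_two_quadrics_swept_by_linear_spaces (n : ℕ)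
    (B₁ B₂ : (Fin (2 * n + 4) → ℂ) →ₗ[ℂ] (Fin (2 * n + 4) → ℂ) →ₗ[ℂ] ℂ)
    (hsymm₁ : ∀ x y, B₁ x y = B₁ y x) (hsymm₂ : ∀ x y, B₂ x y = B₂ y x)
    (hsmooth : ∀ x : Fin (2 * n + 4) → ℂ, x ≠ 0 → B₁ x x = 0 → B₂ x x = 0 →
        ∀ a b : ℂ, (∀ v, a * B₁ x v + b * B₂ x v = 0) → a = 0 ∧ b = 0) :
    ∀ x : Fin (2 * n + 4) → ℂ, B₁ x x = 0 → B₂ x x = 0 →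
      ∃ W : Submodule ℂ (Fin (2 * n + 4) → ℂ), Module.finrank ℂ W = n + 1 ∧ x ∈ W ∧
        ∀ w ∈ W, B₁ w w = 0 ∧ B₂ w w = 0 :=
  intersection_two_quadrics_swept_by_linear_spaces_general n B₁ B₂ hsymm₁ hsymm₂
end

section
/- The Schubert variety Ω(1,4) ⊂ G(1, P^4) of lines in P^4 meeting a fixed line admits a hyperplane section (in the Plücker embedding) isomorphic to the Segre threefold P^1 × P^2; consequently every smooth hyperplane section of the Grassmannian G(2, C^5) ⊂ P(∧²C^5) is swept out by copies of P^1 × P^2. -/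
open MvPolynomial


noncomputable section

/-- A subset of `ι → ℂ` is an *algebraic cone* if it is the common zero locus of a set of
homogeneous polynomials (the affine cone over a projective algebraic set). -/
def IsAlgCone (ι : Type) (S : Set (ι → ℂ)) : Prop :=
  ∃ T : Set (MvPolynomial ι ℂ), (∀ f ∈ T, ∃ d, f.IsHomogeneous d) ∧
    S = {x | ∀ f ∈ T, eval x f = 0}

/-- An algebraic cone is *irreducible* (as a projective set) if it contains a nonzero point and
cannot be written as the union of two strictly smaller algebraic cones. -/
def IsIrrCone (ι : Type) (S : Set (ι → ℂ)) : Prop :=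
  (∃ x ∈ S, x ≠ 0) ∧
  ∀ S₁ S₂ : Set (ι → ℂ), IsAlgCone ι S₁ → IsAlgCone ι S₂ → S = S₁ ∪ S₂ → S = S₁ ∨ S = S₂

/-- The projective dimension of (the projective set underlying) a cone `S`, as the Krull
dimension of the poset of irreducible algebraic cones contained in `S`. -/
noncomputable def coneDim (ι : Type) (S : Set (ι → ℂ)) : WithBot ℕ∞ :=
  Order.krullDim {T : Set (ι → ℂ) // IsAlgCone ι T ∧ IsIrrCone ι T ∧ T ⊆ S}

/-- The Zariski tangent space of the cone `S` at `x`: vectors annihilated by the differentials of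
all polynomials vanishing on `S`. -/
noncomputable def coneTangent (ι : Type) [Fintype ι] (S : Set (ι → ℂ)) (x : ι → ℂ) :
    Submodule ℂ (ι → ℂ) where
  carrier := {v | ∀ f : MvPolynomial ι ℂ, (∀ y ∈ S, eval y f = 0) →
      (∑ i, v i * eval x (pderiv i f)) = 0}
  zero_mem' := by intro f _; simp
  add_mem' := by
    intro a b ha hb f hf
    have h1 := ha f hf
    have h2 := hb f hf
    simp only [Pi.add_apply, add_mul, Finset.sum_add_distrib, h1, h2, add_zero]
  smul_mem' := by
    intro c a ha f hf
    have h1 := ha f hf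
    simp only [Pi.smul_apply, smul_eq_mul, mul_assoc, ← Finset.mul_sum, h1, mul_zero]

/-- `x` is a smooth point of the cone `S` over a projective variety of (projective) dimension
`n` if the Zariski tangent space of the cone has dimension `n + 1`. -/
def IsSmoothAt (ι : Type) [Fintype ι] (S : Set (ι → ℂ)) (n : ℕ) (x : ι → ℂ) : Prop :=
  Module.finrank ℂ (coneTangent ι S x) = n + 1

/-- The singular locus of (the cone over) a projective variety of dimension `n`. -/
def SingCone (ι : Type) [Fintype ι] (S : Set (ι → ℂ)) (n : ℕ) : Set (ι → ℂ) :=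
  {x | x ∈ S ∧ x ≠ 0 ∧ ¬ IsSmoothAt ι S n x}

/-- `S` is the affine cone over a smooth irreducible projective variety of dimension `n`. -/
def IsSmoothProjVar (ι : Type) [Fintype ι] (S : Set (ι → ℂ)) (n : ℕ) : Prop :=
  IsAlgCone ι S ∧ IsIrrCone ι S ∧ coneDim ι S = ((n : ℕ∞) : WithBot ℕ∞) ∧
    ∀ x ∈ S, x ≠ 0 → IsSmoothAt ι S n x

/-- `S` is (the cone over) a linear subspace of projective dimension `k`. -/
def IsLinearCone (ι : Type) (S : Set (ι → ℂ)) (k : ℕ) : Prop :=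
  ∃ W : Submodule ℂ (ι → ℂ), Module.finrank ℂ W = k + 1 ∧ S = (W : Set (ι → ℂ))

end

noncomputable section

/-- The Plücker point of the pair of vectors `a, b`. -/
def plueck (ι : Type) (a b : ι → ℂ) : ι × ι → ℂ := fun p => a p.1 * b p.2 - a p.2 * b p.1

/-- The affine cone over the Segre threefold `P^1 × P^2 ⊂ P^5`: decomposable tensors in
`ℂ^2 ⊗ ℂ^3`. -/
def segreCone23 : Set (Fin 2 × Fin 3 → ℂ) :=
  {x | ∃ (a : Fin 2 → ℂ) (b : Fin 3 → ℂ), x = fun p => a p.1 * b p.2}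

/-- The affine cone (in Plücker coordinates) over the Grassmannian `G(2, ℂ^5) = G(1, P^4)`. -/
def grassCone25 : Set (Fin 5 × Fin 5 → ℂ) :=
  {ω | ∃ a b : Fin 5 → ℂ, ω = plueck (Fin 5) a b}

/-- The affine cone over the Schubert variety `Ω(1,4) ⊂ G(1, P^4)` of lines in `P^4` meeting
the fixed line `⟨e₀, e₁⟩`. -/
def omega14Cone : Set (Fin 5 × Fin 5 → ℂ) :=
  {ω | ∃ a b : Fin 5 → ℂ, ω = plueck (Fin 5) a b ∧
    (ω = 0 ∨ ∃ v : Fin 5 → ℂ, v ≠ 0 ∧ v ∈ Submodule.span ℂ {a, b} ∧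
      v ∈ Submodule.span ℂ ({Pi.single 0 1, Pi.single 1 1} : Set (Fin 5 → ℂ)))}

/-!
(a) Cut `Ω(1,4)` (lines meeting `⟨e₀, e₁⟩`) by the hyperplane `p₀₁ = 0`. Write such a line as
`v ∧ w` with `v ∈ ⟨e₀, e₁⟩`; then `p₀₁(v ∧ w)` is the determinant of `v` and the
`⟨e₀, e₁⟩`-component of `w`, so when it vanishes that component is proportional to `v` and may be
dropped. Hence the section is `{s ∧ t | s ∈ ⟨e₀, e₁⟩, t ∈ ⟨e₂, e₃, e₄⟩}`, the image of the Segre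
map `⟨e₀, e₁⟩ ⊗ ⟨e₂, e₃, e₄⟩ → ∧²ℂ⁵`.

(b) A hyperplane `φ` defines the alternating form `B(u, w) = φ(u ∧ w)` on `ℂ⁵`, and a point `a ∧ b`
of the section is a `B`-isotropic plane. It suffices to split `ℂ⁵ = U ⊕ W` with `dim U = 2`,
`B(U, W) = 0` and `a ∧ b = x ∧ y` for some `x ∈ U`, `y ∈ W`: the Segre map of `U ⊗ W` then lies in
the section and passes through `a ∧ b`. If `B(a, f) ≠ 0` for some `f`, take `U = ⟨a, f⟩`,
`W = U^⊥ ∋ b - c a`; symmetrically with `b`. Otherwise `a, b` lie in the radical, and `B`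
restricted to a complement of `⟨a, b⟩` is an alternating form in dimension 3, hence degenerate;
this gives a third radical vector `f`, and `U = ⟨a, f⟩` with any complement `W ∋ b` works.
-/

open Module Submodule Set

section LinearAlgebra

variable {K V M : Type*} [Field K] [AddCommGroup V] [Module K V] [AddCommGroup M] [Module K M]

theorem LinearIndependent.finrank_span_pair {a b : V} (h : LinearIndependent K ![a, b]) :
    finrank K (span K {a, b}) = 2 := by
  rw [← Matrix.range_cons_cons_empty a b ![], finrank_span_eq_card h, Fintype.card_fin]

theorem Module.Dual.apply_eq_sum {R ι : Type*} [CommSemiring R] [Fintype ι] [DecidableEq ι]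
    (α : Module.Dual R (ι → R)) (x : ι → R) : α x = ∑ i, x i * α (Pi.single i 1) := by
  conv_lhs => rw [← Finset.univ_sum_single x]
  refine (map_sum α _ _).trans (Finset.sum_congr rfl fun i _ => ?_)
  rw [← smul_eq_mul, ← map_smul, ← Pi.single_smul', smul_eq_mul, mul_one]

theorem LinearIndependent.exists_dual_apply_eq {ι : Type*} [DecidableEq ι] {v : ι → V}
    (hv : LinearIndependent K v) :
    ∃ l : ι → Module.Dual K V, ∀ i j, l i (v j) = if i = j then 1 else 0 := by
  choose l hl using fun i => LinearMap.exists_extend ((Basis.span hv).coord i)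
  refine ⟨l, fun i j => ?_⟩
  have := LinearMap.congr_fun (hl i) ⟨v j, subset_span (mem_range_self j)⟩
  simp only [LinearMap.comp_apply, Submodule.subtype_apply] at this
  rw [this, ← Basis.span_apply hv j, Basis.coord_apply, Basis.repr_self, Finsupp.single_apply]
  exact if_congr eq_comm rfl rfl

namespace LinearMap.IsAlt

variable {P : V →ₗ[K] V →ₗ[K] M}

theorem apply_smul_add_smul (hP : P.IsAlt) (x y : V) (α β γ δ : K) :
    P (α • x + β • y) (γ • x + δ • y) = (α * δ - β * γ) • P x y := by
  simp only [map_add, map_smul, LinearMap.add_apply, LinearMap.smul_apply, hP.self_eq_zero,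
    ← hP.neg x y]
  module

theorem linearIndependent_of_apply_ne_zero (hP : P.IsAlt) {a b : V} (h : P a b ≠ 0) :
    LinearIndependent K ![a, b] := by
  have ha : a ≠ 0 := by rintro rfl; simp at h
  rw [LinearIndependent.pair_iff' ha]
  rintro c rfl
  simp [hP.self_eq_zero] at h

theorem exists_apply_eq_of_mem_span_pair (hP : P.IsAlt) {a b v : V} (hv : v ∈ span K {a, b})
    (hv0 : v ≠ 0) : ∃ w, P v w = P a b := by
  obtain ⟨s, t, rfl⟩ := mem_span_pair.mp hv
  rcases eq_or_ne t 0 with rfl | ht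
  · have hs : s ≠ 0 := by rintro rfl; simp at hv0
    exact ⟨s⁻¹ • b, by simp [smul_smul, hs]⟩
  · exact ⟨-t⁻¹ • a, by simp [hP.self_eq_zero, ← hP.neg a b, smul_smul, ht]⟩

end LinearMap.IsAlt

end LinearAlgebra

section FiniteDimensional

variable {K V M : Type*} [Field K] [AddCommGroup V] [Module K V] [FiniteDimensional K V]
  [AddCommGroup M] [Module K M] {B : LinearMap.BilinForm K V}

theorem Submodule.exists_linearIndependent_span_eq {X : Submodule K V} {n : ℕ}
    (hX : finrank K X = n) :
    ∃ v : Fin n → V, LinearIndependent K v ∧ span K (range v) = X := by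
  let bX := Module.finBasisOfFinrankEq K X hX
  refine ⟨X.subtype ∘ bX, bX.linearIndependent.map' _ X.ker_subtype, ?_⟩
  rw [range_comp, span_image, bX.span_eq, map_subtype_top]

theorem IsCompl.exists_linearIndependent_sumElim {U W : Submodule K V} (h : IsCompl U W)
    {m n : ℕ} (hU : finrank K U = m) (hW : finrank K W = n) :
    ∃ (u : Fin m → V) (w : Fin n → V), LinearIndependent K (Sum.elim u w) ∧
      span K (range u) = U ∧ span K (range w) = W := by
  obtain ⟨u, hu, rfl⟩ := Submodule.exists_linearIndependent_span_eq hU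
  obtain ⟨w, hw, rfl⟩ := Submodule.exists_linearIndependent_span_eq hW
  exact ⟨u, w, hu.sum_type hw h.disjoint, rfl, rfl⟩

namespace LinearMap.IsAlt

theorem ker_ne_bot_of_odd_finrank [NeZero (2 : K)] (hB : LinearMap.IsAlt B)
    (hV : Odd (finrank K V)) :
    LinearMap.ker B ≠ ⊥ := by
  intro h
  let b := Module.finBasis K V
  let A := LinearMap.BilinForm.toMatrix b B
  have hA : A.transpose = -A := by
    ext i j
    simp only [A, Matrix.transpose_apply, Matrix.neg_apply, LinearMap.BilinForm.toMatrix_apply]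
    rw [hB.neg]
  have hdet : A.det = -A.det :=
    calc A.det = A.transpose.det := (Matrix.det_transpose A).symm
      _ = -A.det := by rw [hA, Matrix.det_neg, Fintype.card_fin, hV.neg_one_pow, neg_one_mul]
  have hdet0 : (2 : K) * A.det = 0 := by linear_combination hdet
  exact (LinearMap.BilinForm.nondegenerate_iff_det_ne_zero b).mp
    (LinearMap.BilinForm.nondegenerate_iff_ker_eq_bot.mpr h)
    ((mul_eq_zero.mp hdet0).resolve_left two_ne_zero)

theorem exists_mem_ker_notMem [NeZero (2 : K)] (hB : LinearMap.IsAlt B) {S C : Submodule K V}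
    (hSC : IsCompl S C) (hS : S ≤ LinearMap.ker B) (hC : Odd (finrank K C)) :
    ∃ f ∈ LinearMap.ker B, f ∉ S := by
  have hBC : LinearMap.IsAlt (B.restrict C) := fun c => hB c
  obtain ⟨f, hf, hf0⟩ := (Submodule.ne_bot_iff _).mp (hBC.ker_ne_bot_of_odd_finrank hC)
  refine ⟨f, ?_, fun hfS => hf0 (Subtype.ext (disjoint_def.mp hSC.disjoint _ hfS f.2))⟩
  rw [LinearMap.mem_ker]
  ext v
  obtain ⟨s, hs, c, hc, rfl⟩ := mem_sup.mp (hSC.sup_eq_top ▸ mem_top : v ∈ S ⊔ C)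
  have hfc : B f c = 0 := LinearMap.congr_fun (LinearMap.mem_ker.mp hf) ⟨c, hc⟩
  have hsf : B s f = 0 := by rw [LinearMap.mem_ker.mp (hS hs), LinearMap.zero_apply]
  simp [hfc, ← hB.neg s, hsf]

theorem isCompl_span_pair_orthogonal (hB : LinearMap.IsAlt B) {x f : V} (hxf : B x f ≠ 0) :
    IsCompl (span K {x, f}) (B.orthogonal (span K {x, f})) := by
  rw [LinearMap.BilinForm.isCompl_orthogonal_iff_disjoint hB.isRefl, disjoint_def]
  intro v hv hvo
  obtain ⟨s, t, rfl⟩ := mem_span_pair.mp hv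
  rw [LinearMap.BilinForm.mem_orthogonal_iff] at hvo
  have ht := hvo x (subset_span (by simp))
  have hs := hvo f (subset_span (by simp))
  simp only [map_add, map_smul, hB.self_eq_zero, ← hB.neg x f, smul_eq_mul, mul_zero, zero_add,
    add_zero, mul_neg, neg_eq_zero, mul_eq_zero, hxf, or_false] at ht hs
  simp [ht, hs]

theorem exists_decomposition_of_apply_ne_zero (hB : LinearMap.IsAlt B) {x y f : V}
    (hxy : B x y = 0) (hxf : B x f ≠ 0) :
    ∃ U W : Submodule K V, IsCompl U W ∧ finrank K U = 2 ∧ W ≤ B.orthogonal U ∧ x ∈ U ∧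
      ∃ c : K, y - c • x ∈ W := by
  refine ⟨_, _, hB.isCompl_span_pair_orthogonal hxf,
    (hB.linearIndependent_of_apply_ne_zero hxf).finrank_span_pair, le_rfl,
    subset_span (by simp), B f y / B f x, ?_⟩
  have hfx : B f x ≠ 0 := by rwa [← hB.neg, neg_ne_zero]
  rw [LinearMap.BilinForm.mem_orthogonal_iff]
  intro n hn
  obtain ⟨s, t, rfl⟩ := mem_span_pair.mp hn
  simp only [map_add, map_smul, map_sub, LinearMap.add_apply, LinearMap.smul_apply, hxy,
    hB.self_eq_zero, smul_eq_mul]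
  field_simp
  ring

theorem exists_decomposition_of_mem_ker [NeZero (2 : K)] (hB : LinearMap.IsAlt B)
    (hV : finrank K V = 5) {a b : V} (hab : LinearIndependent K ![a, b])
    (ha : a ∈ LinearMap.ker B) (hb : b ∈ LinearMap.ker B) :
    ∃ U W : Submodule K V, IsCompl U W ∧ finrank K U = 2 ∧ W ≤ B.orthogonal U ∧ a ∈ U ∧ b ∈ W := by
  have ha0 : a ≠ 0 := hab.ne_zero 0
  obtain ⟨C, hC⟩ := (span K {a, b}).exists_isCompl
  have hC3 : finrank K C = 3 := by
    have := Submodule.finrank_add_eq_of_isCompl hC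
    rw [hab.finrank_span_pair, hV] at this
    omega
  obtain ⟨f, hf, hfab⟩ := hB.exists_mem_ker_notMem hC
    (span_le.mpr (by simp [insert_subset_iff, ha, hb])) (by rw [hC3]; decide)
  have haf : LinearIndependent K ![a, f] := by
    rw [LinearIndependent.pair_iff' ha0]
    rintro c rfl
    exact hfab (smul_mem _ _ (subset_span (by simp)))
  have hbU : b ∉ span K {a, f} := by
    intro hbU
    obtain ⟨s, t, hst⟩ := mem_span_pair.mp hbU
    rcases eq_or_ne t 0 with rfl | ht
    · exact (LinearIndependent.pair_iff' ha0).mp hab s (by simpa using hst)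
    · apply hfab
      rw [show f = t⁻¹ • (b - s • a) by
        rw [← hst, add_sub_cancel_left, smul_smul, inv_mul_cancel₀ ht, one_smul]]
      exact smul_mem _ _ (sub_mem (subset_span (by simp)) (smul_mem _ _ (subset_span (by simp))))
  obtain ⟨W, hbW, hWU⟩ := ((disjoint_span_singleton' (hab.ne_zero 1)).mpr hbU).symm.exists_isCompl
  have hUker : span K {a, f} ≤ LinearMap.ker B := span_le.mpr (by simp [insert_subset_iff, ha, hf])
  refine ⟨_, W, hWU.symm, haf.finrank_span_pair, fun w _ => ?_, subset_span (by simp),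
    hbW (mem_span_singleton_self b)⟩
  rw [LinearMap.BilinForm.mem_orthogonal_iff]
  intro u hu
  rw [LinearMap.mem_ker.mp (hUker hu), LinearMap.zero_apply]

theorem exists_decomposition_of_finrank_eq_five [NeZero (2 : K)]
    (hB : LinearMap.IsAlt B) (hV : finrank K V = 5) {P : V →ₗ[K] V →ₗ[K] M} (hP : P.IsAlt)
    {a b : V} (hab : LinearIndependent K ![a, b]) (hBab : B a b = 0) :
    ∃ U W : Submodule K V, IsCompl U W ∧ finrank K U = 2 ∧ W ≤ B.orthogonal U ∧
      ∃ x ∈ U, ∃ y ∈ W, P x y = P a b := by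
  by_cases ha : B a ≠ 0
  · obtain ⟨f, hf⟩ := DFunLike.ne_iff.mp ha
    obtain ⟨U, W, hUW, hU, hWU, hx, c, hy⟩ := hB.exists_decomposition_of_apply_ne_zero hBab hf
    exact ⟨U, W, hUW, hU, hWU, a, hx, _, hy, by simp [hP.self_eq_zero]⟩
  by_cases hb : B b ≠ 0
  · obtain ⟨f, hf⟩ := DFunLike.ne_iff.mp hb
    obtain ⟨U, W, hUW, hU, hWU, hx, c, hy⟩ :=
      hB.exists_decomposition_of_apply_ne_zero (y := -a)
        (by rw [map_neg, ← hB.neg, hBab, neg_zero, neg_zero]) hf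
    exact ⟨U, W, hUW, hU, hWU, b, hx, _, hy, by simp [hP.self_eq_zero, hP.neg]⟩
  simp only [ne_eq, not_not, ← LinearMap.mem_ker] at ha hb
  obtain ⟨U, W, hUW, hU, hWU, hx, hy⟩ := hB.exists_decomposition_of_mem_ker hV hab ha hb
  exact ⟨U, W, hUW, hU, hWU, a, hx, b, hy, rfl⟩

end LinearMap.IsAlt

end FiniteDimensional

section Plucker

variable {ι : Type}

def plueckBilin (ι : Type) : (ι → ℂ) →ₗ[ℂ] (ι → ℂ) →ₗ[ℂ] (ι × ι → ℂ) :=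
  LinearMap.mk₂ ℂ (plueck ι)
    (fun _ _ _ => by funext; simp only [plueck, Pi.add_apply]; ring)
    (fun _ _ _ => by funext; simp only [plueck, Pi.smul_apply, smul_eq_mul]; ring)
    (fun _ _ _ => by funext; simp only [plueck, Pi.add_apply]; ring)
    (fun _ _ _ => by funext; simp only [plueck, Pi.smul_apply, smul_eq_mul]; ring)

@[simp]
theorem plueckBilin_apply (a b : ι → ℂ) : plueckBilin ι a b = plueck ι a b := rfl

theorem plueckBilin_isAlt : (plueckBilin ι).IsAlt := fun a => by
  funext p
  simp [plueck, mul_comm]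

variable {m n : Type*} [Fintype m] [Fintype n]

def segreMap (u : m → ι → ℂ) (w : n → ι → ℂ) : (m × n → ℂ) →ₗ[ℂ] (ι × ι → ℂ) :=
  Fintype.linearCombination ℂ fun q => plueck ι (u q.1) (w q.2)

theorem segreMap_apply_mul (u : m → ι → ℂ) (w : n → ι → ℂ) (s : m → ℂ) (t : n → ℂ) :
    segreMap u w (fun q => s q.1 * t q.2) = plueck ι (∑ i, s i • u i) (∑ j, t j • w j) := by
  simp only [segreMap, Fintype.linearCombination_apply, Fintype.sum_prod_type, ← plueckBilin_apply,
    map_sum, map_smul, LinearMap.sum_apply, LinearMap.smul_apply, mul_smul, Finset.smul_sum]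
  rw [Finset.sum_comm]
  exact Finset.sum_congr rfl fun _ _ => Finset.sum_congr rfl fun _ _ => smul_comm _ _ _

theorem image_segreMap_segreCone23 (u : Fin 2 → ι → ℂ) (w : Fin 3 → ι → ℂ) :
    segreMap u w '' segreCone23 =
      {ω | ∃ s ∈ span ℂ (range u), ∃ t ∈ span ℂ (range w), plueck ι s t = ω} := by
  ext ω
  simp only [segreCone23, Set.mem_image, mem_span_range_iff_exists_fun]
  constructor
  · rintro ⟨_, ⟨s, t, rfl⟩, rfl⟩
    exact ⟨_, ⟨s, rfl⟩, _, ⟨t, rfl⟩, (segreMap_apply_mul u w s t).symm⟩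
  · rintro ⟨_, ⟨s, rfl⟩, _, ⟨t, rfl⟩, rfl⟩
    exact ⟨_, ⟨s, t, rfl⟩, segreMap_apply_mul u w s t⟩

variable [Fintype ι] [DecidableEq ι]

/-- The Plücker vector `ω` evaluated on the decomposable covector `α ∧ β`. -/
def plueckPairing (α β : Module.Dual ℂ (ι → ℂ)) : (ι × ι → ℂ) →ₗ[ℂ] ℂ :=
  ∑ p : ι × ι, (α (Pi.single p.1 1) * β (Pi.single p.2 1)) • LinearMap.proj p

theorem plueckPairing_plueck (α β : Module.Dual ℂ (ι → ℂ)) (y z : ι → ℂ) :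
    plueckPairing α β (plueck ι y z) = α y * β z - α z * β y := by
  rw [α.apply_eq_sum y, α.apply_eq_sum z, β.apply_eq_sum y, β.apply_eq_sum z, Finset.sum_mul_sum,
    Finset.sum_mul_sum, ← Finset.sum_sub_distrib]
  simp only [plueckPairing, LinearMap.sum_apply, LinearMap.smul_apply, LinearMap.proj_apply,
    Fintype.sum_prod_type, plueck, smul_eq_mul, ← Finset.sum_sub_distrib]
  refine Finset.sum_congr rfl fun i _ => Finset.sum_congr rfl fun j _ => ?_
  ring

theorem segreMap_injective [DecidableEq m] [DecidableEq n] {u : m → ι → ℂ} {w : n → ι → ℂ}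
    (h : LinearIndependent ℂ (Sum.elim u w)) : Function.Injective (segreMap u w) := by
  obtain ⟨l, hl⟩ := h.exists_dual_apply_eq
  have huu (i k) : l (.inl i) (u k) = if i = k then 1 else 0 := by simpa using hl (.inl i) (.inl k)
  have hww (j k) : l (.inr j) (w k) = if j = k then 1 else 0 := by simpa using hl (.inr j) (.inr k)
  have huw (i k) : l (.inl i) (w k) = 0 := by simpa using hl (.inl i) (.inr k)
  have hwu (j k) : l (.inr j) (u k) = 0 := by simpa using hl (.inr j) (.inl k)
  have hcoord : ∀ x i j, plueckPairing (l (.inl i)) (l (.inr j)) (segreMap u w x) = x (i, j) := by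
    intro x i j
    simp [segreMap, Fintype.linearCombination_apply, plueckPairing_plueck, huu, hww, huw, hwu,
      Fintype.sum_prod_type]
  intro x y hxy
  funext ⟨i, j⟩
  rw [← hcoord x, ← hcoord y, hxy]

end Plucker

theorem setOf_plueck_span_eq_omega14Cone_inter :
    {ω | ∃ s ∈ span ℂ {Pi.single 0 1, Pi.single 1 1},
      ∃ t ∈ span ℂ (range ![Pi.single 2 1, Pi.single 3 1, Pi.single 4 1]),
      plueck (Fin 5) s t = ω} = omega14Cone ∩ {ω | ω (0, 1) = 0} := by
  ext ω
  constructor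
  · rintro ⟨s, hs, t, ht, rfl⟩
    obtain ⟨c, rfl⟩ := (mem_span_range_iff_exists_fun ℂ).mp ht
    refine ⟨⟨s, _, rfl, ?_⟩, by simp [plueck, Fin.sum_univ_three]⟩
    by_cases hs0 : s = 0
    · left
      funext
      simp [plueck, hs0]
    · exact .inr ⟨s, hs0, subset_span (by simp), hs⟩
  · rintro ⟨⟨a, b, rfl, h0 | ⟨v, hv0, hvab, hv⟩⟩, h01⟩
    · refine ⟨0, zero_mem _, 0, zero_mem _, ?_⟩
      rw [h0]
      funext
      simp [plueck]
    obtain ⟨w, hw⟩ := plueckBilin_isAlt.exists_apply_eq_of_mem_span_pair hvab hv0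
    rw [Set.mem_ofPred_eq, ← plueckBilin_apply, ← hw] at h01
    obtain ⟨α, β, rfl⟩ := mem_span_pair.mp hv
    have hw01 : α * w 1 - β * w 0 = 0 := by
      simp [plueck] at h01
      linear_combination h01
    set t : Fin 5 → ℂ := w 2 • Pi.single 2 1 + w 3 • Pi.single 3 1 + w 4 • Pi.single 4 1
    have hwt : w = (w 0 • Pi.single 0 1 + w 1 • Pi.single 1 1) + t := by
      funext i
      fin_cases i <;> simp [t]
    refine ⟨_, hv, t, (mem_span_range_iff_exists_fun ℂ).mpr ⟨![w 2, w 3, w 4], by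
      simp [t, Fin.sum_univ_three]⟩, ?_⟩
    calc plueck (Fin 5) (α • Pi.single 0 1 + β • Pi.single 1 1) t
        = plueckBilin (Fin 5) (α • Pi.single 0 1 + β • Pi.single 1 1)
            (w 0 • Pi.single 0 1 + w 1 • Pi.single 1 1) +
          plueckBilin (Fin 5) (α • Pi.single 0 1 + β • Pi.single 1 1) t := by
          rw [plueckBilin_isAlt.apply_smul_add_smul, hw01, zero_smul, zero_add, plueckBilin_apply]
      _ = plueck (Fin 5) a b := by rw [← map_add, ← hwt, hw, plueckBilin_apply]

theorem linearIndependent_sumElim_single :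
    LinearIndependent ℂ (Sum.elim ![Pi.single 0 1, Pi.single 1 1]
      ![Pi.single 2 1, Pi.single 3 1, Pi.single 4 1] : Fin 2 ⊕ Fin 3 → Fin 5 → ℂ) := by
  have h : (Sum.elim ![Pi.single 0 1, Pi.single 1 1]
      ![Pi.single 2 1, Pi.single 3 1, Pi.single 4 1] : Fin 2 ⊕ Fin 3 → Fin 5 → ℂ) =
      Pi.basisFun ℂ (Fin 5) ∘ finSumFinEquiv := by
    ext (i | i) : 1 <;> fin_cases i <;> simp [Pi.basisFun_apply] <;> rfl
  rw [h]
  exact (Pi.basisFun ℂ (Fin 5)).linearIndependent.comp _ finSumFinEquiv.injective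

theorem exists_segre_through_plueck_of_map_eq_zero {ι : Type} [Fintype ι]
    (hι : Fintype.card ι = 5) (φ : (ι × ι → ℂ) →ₗ[ℂ] ℂ) {a b : ι → ℂ}
    (hab : plueck ι a b ≠ 0) (hφ : φ (plueck ι a b) = 0) :
    ∃ (u : Fin 2 → ι → ℂ) (w : Fin 3 → ι → ℂ), LinearIndependent ℂ (Sum.elim u w) ∧
      (∀ s ∈ span ℂ (range u), ∀ t ∈ span ℂ (range w), φ (plueck ι s t) = 0) ∧
      ∃ s ∈ span ℂ (range u), ∃ t ∈ span ℂ (range w), plueck ι s t = plueck ι a b := by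
  let B : LinearMap.BilinForm ℂ (ι → ℂ) := (plueckBilin ι).compr₂ φ
  have hB : LinearMap.IsAlt B := fun v => by simp [B, plueckBilin_isAlt.self_eq_zero]
  obtain ⟨U, W, hUW, hU, hWU, s, hs, t, ht, hst⟩ :=
    hB.exists_decomposition_of_finrank_eq_five (by simp [hι]) plueckBilin_isAlt
      (plueckBilin_isAlt.linearIndependent_of_apply_ne_zero hab) hφ
  have hW : finrank ℂ W = 3 := by
    have := finrank_add_eq_of_isCompl hUW
    simp only [Module.finrank_fintype_fun_eq_card, hι, hU] at this
    omega
  obtain ⟨u, w, hli, rfl, rfl⟩ := hUW.exists_linearIndependent_sumElim hU hW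
  exact ⟨u, w, hli, fun s hs t ht => LinearMap.BilinForm.mem_orthogonal_iff.mp (hWU ht) s hs,
    s, hs, t, ht, hst⟩

/-- (a) The Schubert variety `Ω(1,4)` of lines meeting a fixed line admits a hyperplane section
(in the Plücker embedding) projectively isomorphic to the Segre threefold `P^1 × P^2`;
(b) consequently every smooth hyperplane section of `G(2, ℂ^5)` is swept out by copies of the
Segre threefold. -/
theorem schubert_segre_and_hyperplane_sections_swept :
    (∃ φ : (Fin 5 × Fin 5 → ℂ) →ₗ[ℂ] ℂ, φ ≠ 0 ∧
      ∃ ι : (Fin 2 × Fin 3 → ℂ) →ₗ[ℂ] (Fin 5 × Fin 5 → ℂ), Function.Injective ι ∧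
        ι '' segreCone23 = omega14Cone ∩ {ω | φ ω = 0}) ∧
    (∀ φ : (Fin 5 × Fin 5 → ℂ) →ₗ[ℂ] ℂ, φ ≠ 0 →
      IsSmoothProjVar (Fin 5 × Fin 5) (grassCone25 ∩ {ω | φ ω = 0}) 5 →
      ∀ x ∈ grassCone25 ∩ {ω | φ ω = 0}, x ≠ 0 →
        ∃ ι : (Fin 2 × Fin 3 → ℂ) →ₗ[ℂ] (Fin 5 × Fin 5 → ℂ), Function.Injective ι ∧
          ι '' segreCone23 ⊆ grassCone25 ∩ {ω | φ ω = 0} ∧ x ∈ ι '' segreCone23) := by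
  constructor
  · refine ⟨LinearMap.proj (0, 1), fun h => ?_, segreMap _ _,
      segreMap_injective linearIndependent_sumElim_single, ?_⟩
    · simpa [plueck] using LinearMap.congr_fun h (plueck (Fin 5) (Pi.single 0 1) (Pi.single 1 1))
    · rw [image_segreMap_segreCone23, Matrix.range_cons_cons_empty]
      exact setOf_plueck_span_eq_omega14Cone_inter
  · rintro φ - - _ ⟨⟨a, b, rfl⟩, hφx⟩ hx0
    obtain ⟨u, w, hli, hvanish, s, hs, t, ht, hst⟩ :=
      exists_segre_through_plueck_of_map_eq_zero (by simp) φ hx0 hφx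
    refine ⟨segreMap u w, segreMap_injective hli, ?_, ?_⟩ <;> rw [image_segreMap_segreCone23]
    · rintro _ ⟨s, hs, t, ht, rfl⟩
      exact ⟨⟨s, t, rfl⟩, hvanish s hs t ht⟩
    · exact ⟨s, hs, t, ht, hst⟩

end
end
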